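/- Let ν, C, T > 0 be real numbers, set δ = min{1, ν/4}·e^(−2CT) and L = δ⁻¹. Let h : [0,T] → [0,∞) be integrable and a ≥ 0 a real number with a + ∫₀ᵀ h(t) dt < δ. Let φ : [0,T] → [0,∞) be continuous on [0,T], differentiable on (0,T), with φ(0) ≤ a and φ′(t) ≤ C·(φ(t) + φ(t)³) + (4/ν)·h(t) for all t ∈ (0,T). Then for every t ∈ [0,T] one has φ(t) ≤ L·(a + ∫₀ᵀ h(s) ds) < 1. -/

import Mathlib

open MeasureTheory intervalIntegral Real Set

/-!
While `φ ≤ 1` the cubic term is dominated, `φ + φ³ ≤ 2φ`, so `φ` satisfies the linear inequality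
`φ' ≤ 2Cφ + (4/ν)h`; the integrating factor `e^{-2Ct}` then gives
`φ(t) ≤ e^{2CT}(a + (4/ν)∫₀ᵀ h) ≤ L(a + ∫₀ᵀ h) < 1`, using `min 1 (ν/4) · max 1 (4/ν) = 1`.
Since this bound is strictly below `1`, continuity of `φ` prevents it from ever reaching `1`,
so the truncation is never active.
-/

theorem le_exp_mul_add_integral_of_hasDerivAt_le {f f' g : ℝ → ℝ} {K a b : ℝ} (hK : 0 ≤ K)
    (hab : a ≤ b) (hf : ContinuousOn f (Icc a b)) (hf' : ∀ x ∈ Ioo a b, HasDerivAt f (f' x) x)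
    (hg : IntervalIntegrable g volume a b) (hg₀ : ∀ x ∈ Ioo a b, 0 ≤ g x)
    (hle : ∀ x ∈ Ioo a b, f' x ≤ K * f x + g x) :
    f b ≤ exp (K * (b - a)) * (f a + ∫ x in a..b, g x) := by
  set w : ℝ → ℝ := fun x ↦ exp (-(K * (x - a))) * f x
  have hw : ContinuousOn w (Icc a b) := by fun_prop
  have hw' : ∀ x ∈ Ioo a b, HasDerivAt w (exp (-(K * (x - a))) * (f' x - K * f x)) x := by
    intro x hx
    exact ((((hasDerivAt_id x).sub_const a).const_mul K).neg.exp.mul (hf' x hx)).congr_deriv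
      (by simp only [Pi.neg_apply, id]; ring)
  have hw'_le : ∀ x ∈ Ioo a b, exp (-(K * (x - a))) * (f' x - K * f x) ≤ g x := by
    intro x hx
    have hexp : exp (-(K * (x - a))) ≤ 1 :=
      exp_le_one_iff.2 (neg_nonpos.2 (mul_nonneg hK (sub_nonneg.2 hx.1.le)))
    calc exp (-(K * (x - a))) * (f' x - K * f x) ≤ exp (-(K * (x - a))) * g x := by
          gcongr; linarith [hle x hx]
      _ ≤ g x := mul_le_of_le_one_left (hg₀ x hx) hexp
  have key := sub_le_integral_of_hasDeriv_right_of_le hab hw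
    (fun x hx ↦ (hw' x hx).hasDerivWithinAt)
    ((intervalIntegrable_iff_integrableOn_Icc_of_le hab).1 hg) hw'_le
  have hwb : exp (-(K * (b - a))) * f b ≤ f a + ∫ x in a..b, g x := by
    simp only [w, sub_self, mul_zero, neg_zero, exp_zero, one_mul] at key
    linarith
  calc f b = exp (K * (b - a)) * (exp (-(K * (b - a))) * f b) := by
        rw [← mul_assoc, ← exp_add, add_neg_cancel, exp_zero, one_mul]
    _ ≤ exp (K * (b - a)) * (f a + ∫ x in a..b, g x) := by gcongr

theorem le_of_continuousOn_of_forall_le_of_forall_Ico_le {f : ℝ → ℝ} {a b B M : ℝ}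
    (hf : ContinuousOn f (Icc a b)) (hBM : B < M)
    (hbound : ∀ τ ∈ Icc a b, (∀ s ∈ Ico a τ, f s ≤ M) → f τ ≤ B) :
    ∀ t ∈ Icc a b, f t ≤ B := by
  set K := Icc a b ∩ f ⁻¹' Ici M
  have hlt : ∀ t ∈ Icc a b, f t < M := by
    by_contra! hreach
    have hK : K.Nonempty := hreach
    have hKc : IsCompact K := isCompact_Icc.of_isClosed_subset
      (hf.preimage_isClosed_of_isClosed isClosed_Icc isClosed_Ici) inter_subset_left
    have hu : sInf K ∈ K := hKc.sInf_mem hK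
    have hbelow : ∀ s ∈ Ico a (sInf K), f s ≤ M := fun s hs ↦ by
      by_contra! hs'
      exact (csInf_le hKc.bddBelow ⟨⟨hs.1, hs.2.le.trans hu.1.2⟩, hs'.le⟩).not_gt hs.2
    exact (hbound _ hu.1 hbelow).not_gt (hBM.trans_le hu.2)
  exact fun t ht ↦ hbound t ht fun s hs ↦ (hlt s ⟨hs.1, hs.2.le.trans ht.2⟩).le

theorem add_inv_mul_le_inv_min_mul {x y c : ℝ} (hx : 0 ≤ x) (hy : 0 ≤ y) (hc : 0 < c) :
    x + c⁻¹ * y ≤ (min 1 c)⁻¹ * (x + y) := by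
  have hm : 0 < min 1 c := lt_min one_pos hc
  have h1 : 1 ≤ (min 1 c)⁻¹ := one_le_inv₀ hm |>.2 (min_le_left _ _)
  have h2 : c⁻¹ ≤ (min 1 c)⁻¹ := inv_anti₀ hm (min_le_right _ _)
  nlinarith

theorem gronwall_truncation_general
    (ν C T : ℝ) (hν : 0 < ν) (hC : 0 < C)
    (δ L : ℝ) (hδ : δ = min 1 (ν / 4) * Real.exp (-2 * C * T)) (hL : L = δ⁻¹)
    (h : ℝ → ℝ) (hint : IntervalIntegrable h volume 0 T)
    (hnonneg : ∀ t ∈ Icc (0 : ℝ) T, 0 ≤ h t)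
    (a : ℝ) (ha : 0 ≤ a) (hsmall : a + ∫ t in (0 : ℝ)..T, h t < δ)
    (φ φ' : ℝ → ℝ) (hφc : ContinuousOn φ (Icc 0 T))
    (hφnonneg : ∀ t ∈ Icc (0 : ℝ) T, 0 ≤ φ t)
    (hφ0 : φ 0 ≤ a)
    (hderiv : ∀ t ∈ Ioo (0 : ℝ) T, HasDerivAt φ (φ' t) t)
    (hineq : ∀ t ∈ Ioo (0 : ℝ) T,
      φ' t ≤ C * (φ t + φ t ^ 3) + (4 / ν) * h t) :
    ∀ t ∈ Icc (0 : ℝ) T,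
      φ t ≤ L * (a + ∫ s in (0 : ℝ)..T, h s)
        ∧ L * (a + ∫ s in (0 : ℝ)..T, h s) < 1 := by
  set I := ∫ s in (0 : ℝ)..T, h s
  have hδ₀ : 0 < δ := hδ ▸ by positivity
  have hLI : L * (a + I) < 1 := hL ▸ (inv_mul_lt_one₀ hδ₀).2 hsmall
  refine fun t ht ↦ ⟨?_, hLI⟩
  refine le_of_continuousOn_of_forall_le_of_forall_Ico_le hφc hLI (fun τ hτ hbelow ↦ ?_) t ht
  have hIoo : Ioo 0 τ ⊆ Ioo 0 T := Ioo_subset_Ioo_right hτ.2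
  have hlin : ∀ s ∈ Ioo 0 τ, φ' s ≤ 2 * C * φ s + 4 / ν * h s := fun s hs ↦ by
    have hφs : 0 ≤ φ s := hφnonneg s (Ioo_subset_Icc_self (hIoo hs))
    have hcube : φ s ^ 3 ≤ φ s := by
      nlinarith [hbelow s (Ioo_subset_Ico_self hs), mul_nonneg hφs hφs]
    nlinarith [hineq s (hIoo hs)]
  have hgron := le_exp_mul_add_integral_of_hasDerivAt_le (by positivity) hτ.1
    (hφc.mono (Icc_subset_Icc_right hτ.2)) (fun s hs ↦ hderiv s (hIoo hs))
    ((hint.mono_set (uIcc_subset_uIcc_left (Icc_subset_uIcc hτ))).const_mul (4 / ν))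
    (fun s hs ↦ by have := hnonneg s (Ioo_subset_Icc_self (hIoo hs)); positivity) hlin
  have hIτ : ∫ s in (0 : ℝ)..τ, h s ≤ I :=
    integral_mono_interval le_rfl hτ.1 hτ.2
      (ae_restrict_of_forall_mem measurableSet_Ioc fun s hs ↦ hnonneg s ⟨hs.1.le, hs.2⟩) hint
  have hI : 0 ≤ I := integral_nonneg (hτ.1.trans hτ.2) hnonneg
  calc φ τ ≤ exp (2 * C * (τ - 0)) * (φ 0 + ∫ s in (0 : ℝ)..τ, 4 / ν * h s) := hgron
    _ ≤ exp (2 * C * τ) * (a + (ν / 4)⁻¹ * I) := by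
      rw [intervalIntegral.integral_const_mul, inv_div, sub_zero]
      gcongr
    _ ≤ exp (2 * C * T) * (a + (ν / 4)⁻¹ * I) := by
      gcongr
      exact hτ.2
    _ ≤ exp (2 * C * T) * ((min 1 (ν / 4))⁻¹ * (a + I)) := by
      gcongr
      exact add_inv_mul_le_inv_min_mul ha hI (by positivity)
    _ = L * (a + I) := by rw [hL, hδ, mul_inv, ← exp_neg]; ring_nf

/-- Gronwall-type comparison lemma: let `ν, C, T > 0`, set
`δ = min 1 (ν/4) · e^(−2CT)` and `L = δ⁻¹`. Let `h : [0,T] → [0,∞)` be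
integrable and `a ≥ 0` with `a + ∫₀ᵀ h < δ`. If `φ : [0,T] → [0,∞)` is
continuous on `[0,T]`, differentiable on `(0,T)` with derivative `φ'`,
`φ(0) ≤ a` and `φ′(t) ≤ C·(φ(t) + φ(t)³) + (4/ν)·h(t)` on `(0,T)`, then
`φ(t) ≤ L·(a + ∫₀ᵀ h) < 1` for every `t ∈ [0,T]`. -/
theorem gronwall_truncation
    (ν C T : ℝ) (hν : 0 < ν) (hC : 0 < C) (hT : 0 < T)
    (δ L : ℝ) (hδ : δ = min 1 (ν / 4) * Real.exp (-2 * C * T)) (hL : L = δ⁻¹)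
    (h : ℝ → ℝ) (hint : IntervalIntegrable h volume 0 T)
    (hnonneg : ∀ t ∈ Icc (0 : ℝ) T, 0 ≤ h t)
    (a : ℝ) (ha : 0 ≤ a) (hsmall : a + ∫ t in (0 : ℝ)..T, h t < δ)
    (φ φ' : ℝ → ℝ) (hφc : ContinuousOn φ (Icc 0 T))
    (hφnonneg : ∀ t ∈ Icc (0 : ℝ) T, 0 ≤ φ t)
    (hφ0 : φ 0 ≤ a)
    (hderiv : ∀ t ∈ Ioo (0 : ℝ) T, HasDerivAt φ (φ' t) t)
    (hineq : ∀ t ∈ Ioo (0 : ℝ) T,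
      φ' t ≤ C * (φ t + φ t ^ 3) + (4 / ν) * h t) :
    ∀ t ∈ Icc (0 : ℝ) T,
      φ t ≤ L * (a + ∫ s in (0 : ℝ)..T, h s)
        ∧ L * (a + ∫ s in (0 : ℝ)..T, h s) < 1 :=
  gronwall_truncation_general ν C T hν hC δ L hδ hL h hint hnonneg a ha hsmall φ φ' hφc hφnonneg hφ0
    hderiv hineq
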